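/- The manifold M = (R^{2k+l}, g) with g(∂x_i,∂x_j) = -2ψ_{ij}(y), g(∂y_a,∂y_b) = C_{ab}, g(∂x_i,∂xbar_i) = 1, is Jacobi--Videv: at every point, the Ricci operator rho commutes with every Jacobi operator J(ξ). In fact rho J(ξ_1,ξ_2) = J(ξ_1,ξ_2) rho = 0 for all tangent vectors ξ_1, ξ_2. -/

import Mathlib

noncomputable section

open Finset in
/-- Partial derivative in the `i`-th coordinate direction. -/
def pd {ι : Type*} [Fintype ι] [DecidableEq ι]
    (i : ι) (f : (ι → ℝ) → ℝ) (p : ι → ℝ) : ℝ :=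
  fderiv ℝ f p (Pi.single i 1)

/-- Christoffel symbols of the second kind `Γ^k_{ij}` of the metric `g`
(with inverse metric `ginv`). -/
def christoffel {ι : Type*} [Fintype ι] [DecidableEq ι]
    (g ginv : (ι → ℝ) → Matrix ι ι ℝ) (k i j : ι) (p : ι → ℝ) : ℝ :=
  (1 / 2) * ∑ l, ginv p k l *
    (pd i (fun q => g q j l) p + pd j (fun q => g q i l) p - pd l (fun q => g q i j) p)

/-- Components of the curvature operator of the Levi-Civita connection:
`R(∂_i,∂_j)∂_k = ∑_l (curvOp g ginv i j k l) ∂_l`. -/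
def curvOp {ι : Type*} [Fintype ι] [DecidableEq ι]
    (g ginv : (ι → ℝ) → Matrix ι ι ℝ) (i j k l : ι) (p : ι → ℝ) : ℝ :=
  pd i (christoffel g ginv l j k) p - pd j (christoffel g ginv l i k) p
    + ∑ m, christoffel g ginv l i m p * christoffel g ginv m j k p
    - ∑ m, christoffel g ginv l j m p * christoffel g ginv m i k p

/-- The curvature operator extended multilinearly to tangent vectors:
component `l` of `R(v,w)u`. -/
def curvVec {ι : Type*} [Fintype ι] [DecidableEq ι]
    (g ginv : (ι → ℝ) → Matrix ι ι ℝ) (p : ι → ℝ) (v w u : ι → ℝ) : ι → ℝ :=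
  fun l => ∑ i, ∑ j, ∑ k, v i * w j * u k * curvOp g ginv i j k l p

/-- The polarized Jacobi operator `J(v,w)u = (1/2){R(u,v)w + R(u,w)v}`. -/
def jacobiVec {ι : Type*} [Fintype ι] [DecidableEq ι]
    (g ginv : (ι → ℝ) → Matrix ι ι ℝ) (p : ι → ℝ) (v w u : ι → ℝ) : ι → ℝ :=
  fun l => (1 / 2) * (curvVec g ginv p u v w l + curvVec g ginv p u w v l)

/-- The Ricci tensor `Ric_{ij} = Tr (z ↦ R(z,∂_i)∂_j)`. -/
def ricci {ι : Type*} [Fintype ι] [DecidableEq ι]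
    (g ginv : (ι → ℝ) → Matrix ι ι ℝ) (i j : ι) (p : ι → ℝ) : ℝ :=
  ∑ m, curvOp g ginv m i j m p

/-- The Ricci operator (Ricci tensor with one index raised by `g`), as a matrix:
`rho(∂_j) = ∑_i (ricciOp p) i j ∂_i`. -/
def ricciOp {ι : Type*} [Fintype ι] [DecidableEq ι]
    (g ginv : (ι → ℝ) → Matrix ι ι ℝ) (p : ι → ℝ) : Matrix ι ι ℝ :=
  fun i j => ∑ m, ginv p i m * ricci g ginv m j p

/-- The (0,4) curvature tensor `R_{ijkl} = g(R(∂_i,∂_j)∂_k, ∂_l)`. -/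
def curv4 {ι : Type*} [Fintype ι] [DecidableEq ι]
    (g ginv : (ι → ℝ) → Matrix ι ι ℝ) (i j k l : ι) (p : ι → ℝ) : ℝ :=
  ∑ m, curvOp g ginv i j k m p * g p m l

/-- The metric of Definition 1.1: coordinates `(x, y, x̄)` indexed by
`Fin k ⊕ (Fin l ⊕ Fin k)`, with `g(∂xᵢ,∂xⱼ) = -2ψᵢⱼ(y)`, `g(∂yₐ,∂y_b) = C_{ab}`,
`g(∂xᵢ,∂x̄ᵢ) = 1`. -/
def gPsi (k l : ℕ) (ψ : (Fin l → ℝ) → Matrix (Fin k) (Fin k) ℝ)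
    (C : Matrix (Fin l) (Fin l) ℝ) (p : (Fin k ⊕ (Fin l ⊕ Fin k)) → ℝ) :
    Matrix (Fin k ⊕ (Fin l ⊕ Fin k)) (Fin k ⊕ (Fin l ⊕ Fin k)) ℝ :=
  fun a b => match a, b with
    | .inl i, .inl j => -2 * ψ (fun c => p (.inr (.inl c))) i j
    | .inr (.inl a), .inr (.inl b) => C a b
    | .inl i, .inr (.inr j) => if i = j then 1 else 0
    | .inr (.inr i), .inl j => if i = j then 1 else 0
    | _, _ => 0
section Aux

variable {k l : ℕ}

abbrev Idx (k l : ℕ) := Fin k ⊕ (Fin l ⊕ Fin k)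

def Yl (k l : ℕ) : ((Idx k l) → ℝ) →L[ℝ] (Fin l → ℝ) :=
  ContinuousLinearMap.pi (fun c => ContinuousLinearMap.proj (Sum.inr (Sum.inl c)))

lemma pd_zero (d : Idx k l) (p : Idx k l → ℝ) (c : ℝ) : pd d (fun _ => c) p = 0 := by
  simp [pd]

lemma pd_comp {f : (Fin l → ℝ) → ℝ} (hf : Differentiable ℝ f) (d : Idx k l) (p : Idx k l → ℝ) :
    pd d (fun q => f (Yl k l q)) p
      = fderiv ℝ f (Yl k l p) (fun c => (Pi.single d (1:ℝ) : Idx k l → ℝ) (Sum.inr (Sum.inl c))) := by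
  have h : (fun q => f (Yl k l q)) = f ∘ (Yl k l) := rfl
  rw [pd, h, fderiv_comp p (hf _) (Yl k l).differentiableAt, (Yl k l).fderiv]
  rfl

lemma pd_comp_x {f : (Fin l → ℝ) → ℝ} (hf : Differentiable ℝ f) (i : Fin k) (p : Idx k l → ℝ) :
    pd (Sum.inl i : Idx k l) (fun q => f (Yl k l q)) p = 0 := by
  rw [pd_comp hf]
  have h : (fun c => (Pi.single (Sum.inl i : Idx k l) (1:ℝ) : Idx k l → ℝ) (Sum.inr (Sum.inl c))) = (0 : (Fin l → ℝ)) := by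
    funext c; simp [Pi.single_apply]
  rw [h, map_zero]

lemma pd_comp_xbar {f : (Fin l → ℝ) → ℝ} (hf : Differentiable ℝ f) (i : Fin k) (p : Idx k l → ℝ) :
    pd (Sum.inr (Sum.inr i) : Idx k l) (fun q => f (Yl k l q)) p = 0 := by
  rw [pd_comp hf]
  have h : (fun c => (Pi.single (Sum.inr (Sum.inr i) : Idx k l) (1:ℝ) : Idx k l → ℝ) (Sum.inr (Sum.inl c))) = (0 : (Fin l → ℝ)) := by
    funext c; simp [Pi.single_apply]
  rw [h, map_zero]

lemma pd_comp_y {f : (Fin l → ℝ) → ℝ} (hf : Differentiable ℝ f) (a : Fin l) (p : Idx k l → ℝ) :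
    pd (Sum.inr (Sum.inl a) : Idx k l) (fun q => f (Yl k l q)) p
      = fderiv ℝ f (Yl k l p) (Pi.single a 1) := by
  rw [pd_comp hf]
  congr 1
  funext c
  simp [Pi.single_apply]

variable {ψ : (Fin l → ℝ) → Matrix (Fin k) (Fin k) ℝ} {C : Matrix (Fin l) (Fin l) ℝ}

/-- derivative of the metric entries, as a function of `y`. -/
def Dg (ψ : (Fin l → ℝ) → Matrix (Fin k) (Fin k) ℝ) (d a b : Idx k l) (y : Fin l → ℝ) : ℝ :=
  match d, a, b with
  | .inr (.inl c), .inl i, .inl j => fderiv ℝ (fun y => -2 * ψ y i j) y (Pi.single c 1)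
  | _, _, _ => 0

@[simp] lemma Dg_d_inl (e : Fin k) (a b : Idx k l) (y : Fin l → ℝ) :
    Dg ψ (Sum.inl e) a b y = 0 := by
  rcases a with i | (c | i) <;> rcases b with j | (e' | j) <;> rfl

@[simp] lemma Dg_d_inr_inr (e : Fin k) (a b : Idx k l) (y : Fin l → ℝ) :
    Dg ψ (Sum.inr (Sum.inr e)) a b y = 0 := by
  rcases a with i | (c | i) <;> rcases b with j | (e' | j) <;> rfl

@[simp] lemma Dg_a_inr (d : Idx k l) (s : Fin l ⊕ Fin k) (b : Idx k l) (y : Fin l → ℝ) :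
    Dg ψ d (Sum.inr s) b y = 0 := by
  rcases d with i | (c | i) <;> rcases s with c' | i' <;> rcases b with j | (e' | j) <;> rfl

@[simp] lemma Dg_b_inr (d : Idx k l) (a : Idx k l) (s : Fin l ⊕ Fin k) (y : Fin l → ℝ) :
    Dg ψ d a (Sum.inr s) y = 0 := by
  rcases d with i | (c | i) <;> rcases a with j | (e' | j) <;> rcases s with c' | i' <;> rfl

@[simp] lemma Dg_val (c : Fin l) (i j : Fin k) (y : Fin l → ℝ) :
    Dg ψ (Sum.inr (Sum.inl c)) (Sum.inl i) (Sum.inl j) y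
      = fderiv ℝ (fun y => -2 * ψ y i j) y (Pi.single c 1) := rfl

/-- the explicit inverse metric, as a function of `y`. -/
def HinvY (ψ : (Fin l → ℝ) → Matrix (Fin k) (Fin k) ℝ) (C : Matrix (Fin l) (Fin l) ℝ)
    (y : Fin l → ℝ) : Matrix (Idx k l) (Idx k l) ℝ :=
  fun a b => match a, b with
  | .inl i, .inr (.inr j) => if i = j then 1 else 0
  | .inr (.inl a), .inr (.inl b) => C⁻¹ a b
  | .inr (.inr i), .inl j => if i = j then 1 else 0
  | .inr (.inr i), .inr (.inr j) => 2 * ψ y i j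
  | _, _ => 0

@[simp] lemma HinvY_xx (i j : Fin k) (y : Fin l → ℝ) : HinvY ψ C y (Sum.inl i) (Sum.inl j) = 0 := rfl
@[simp] lemma HinvY_xy (i : Fin k) (a : Fin l) (y : Fin l → ℝ) : HinvY ψ C y (Sum.inl i) (Sum.inr (Sum.inl a)) = 0 := rfl
@[simp] lemma HinvY_xxb (i j : Fin k) (y : Fin l → ℝ) : HinvY ψ C y (Sum.inl i) (Sum.inr (Sum.inr j)) = if i = j then 1 else 0 := rfl
@[simp] lemma HinvY_yx (a : Fin l) (j : Fin k) (y : Fin l → ℝ) : HinvY ψ C y (Sum.inr (Sum.inl a)) (Sum.inl j) = 0 := rfl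
@[simp] lemma HinvY_yy (a b : Fin l) (y : Fin l → ℝ) : HinvY ψ C y (Sum.inr (Sum.inl a)) (Sum.inr (Sum.inl b)) = C⁻¹ a b := rfl
@[simp] lemma HinvY_yxb (a : Fin l) (j : Fin k) (y : Fin l → ℝ) : HinvY ψ C y (Sum.inr (Sum.inl a)) (Sum.inr (Sum.inr j)) = 0 := rfl
@[simp] lemma HinvY_xbx (i j : Fin k) (y : Fin l → ℝ) : HinvY ψ C y (Sum.inr (Sum.inr i)) (Sum.inl j) = if i = j then 1 else 0 := rfl
@[simp] lemma HinvY_xby (i : Fin k) (a : Fin l) (y : Fin l → ℝ) : HinvY ψ C y (Sum.inr (Sum.inr i)) (Sum.inr (Sum.inl a)) = 0 := rfl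
@[simp] lemma HinvY_xbxb (i j : Fin k) (y : Fin l → ℝ) : HinvY ψ C y (Sum.inr (Sum.inr i)) (Sum.inr (Sum.inr j)) = 2 * ψ y i j := rfl

lemma pd_gPsi (hψ : ∀ i j, ContDiff ℝ (⊤ : ℕ∞) fun y => ψ y i j) (d a b : Idx k l) (p : Idx k l → ℝ) :
    pd d (fun q => gPsi k l ψ C q a b) p = Dg ψ d a b (Yl k l p) := by
  have hdiff : ∀ i j, Differentiable ℝ (fun y => -2 * ψ y i j) := fun i j =>
    (contDiff_const.mul (hψ i j)).differentiable (by simp)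
  rcases a with i | (a' | i) <;> rcases b with j | (b' | j) <;>
    first
    | (rcases d with e | (c | e)
       · exact pd_comp_x (hdiff i j) e p
       · exact pd_comp_y (hdiff i j) c p
       · exact pd_comp_xbar (hdiff i j) e p)
    | simp [gPsi, pd_zero]
lemma Yl_apply (p : Idx k l → ℝ) : Yl k l p = fun c => p (Sum.inr (Sum.inl c)) := rfl

lemma gPsi_mul_HinvY (hCnd : IsUnit C) (p : Idx k l → ℝ) :
    gPsi k l ψ C p * HinvY ψ C (Yl k l p) = 1 := by
  have hC : C * C⁻¹ = 1 := Matrix.mul_nonsing_inv C ((Matrix.isUnit_iff_isUnit_det C).mp hCnd)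
  ext a b
  rcases a with i | (a' | i) <;> rcases b with j | (b' | j) <;>
    simp [Matrix.mul_apply, gPsi, HinvY, Fintype.sum_sum_type, Matrix.one_apply,
      Finset.sum_ite_eq, Finset.sum_ite_eq', mul_ite, ite_mul, Finset.mul_sum, Yl_apply]
  rw [← Matrix.mul_apply, hC, Matrix.one_apply]

lemma ginv_eq {ginv : (Idx k l → ℝ) → Matrix (Idx k l) (Idx k l) ℝ}
    (hCnd : IsUnit C)
    (hginv : ∀ p, gPsi k l ψ C p * ginv p = 1 ∧ ginv p * gPsi k l ψ C p = 1)
    (p : Idx k l → ℝ) : ginv p = HinvY ψ C (Yl k l p) := by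
  calc ginv p = ginv p * (gPsi k l ψ C p * HinvY ψ C (Yl k l p)) := by
        rw [gPsi_mul_HinvY hCnd, mul_one]
    _ = (ginv p * gPsi k l ψ C p) * HinvY ψ C (Yl k l p) := by rw [mul_assoc]
    _ = HinvY ψ C (Yl k l p) := by rw [(hginv p).2, one_mul]
/-- explicit Christoffel symbols as functions of `y`. -/
def Gam (ψ : (Fin l → ℝ) → Matrix (Fin k) (Fin k) ℝ) (C : Matrix (Fin l) (Fin l) ℝ)
    (m i j : Idx k l) (y : Fin l → ℝ) : ℝ :=
  (1 / 2) * ∑ n, HinvY ψ C y m n *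
    (Dg ψ i j n y + Dg ψ j i n y - Dg ψ n i j y)

variable {ginv : (Idx k l → ℝ) → Matrix (Idx k l) (Idx k l) ℝ}

lemma christoffel_eq (hψ : ∀ i j, ContDiff ℝ (⊤ : ℕ∞) fun y => ψ y i j) (hCnd : IsUnit C)
    (hginv : ∀ p, gPsi k l ψ C p * ginv p = 1 ∧ ginv p * gPsi k l ψ C p = 1)
    (m i j : Idx k l) :
    christoffel (gPsi k l ψ C) ginv m i j = fun p => Gam ψ C m i j (Yl k l p) := by
  funext p
  simp only [christoffel, Gam, ginv_eq hCnd hginv p, pd_gPsi hψ]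

lemma diff_Dg (hψ : ∀ i j, ContDiff ℝ (⊤ : ℕ∞) fun y => ψ y i j) (d a b : Idx k l) :
    Differentiable ℝ (Dg ψ d a b) := by
  rcases d with e | (c | e) <;> rcases a with i | (a' | i) <;> rcases b with j | (b' | j) <;>
    try exact differentiable_const 0
  have h1 : ContDiff ℝ (⊤ : ℕ∞) (fun y => -2 * ψ y i j) := contDiff_const.mul (hψ i j)
  have h2 : ContDiff ℝ (⊤ : ℕ∞) (fderiv ℝ (fun y => -2 * ψ y i j)) := h1.fderiv_right (by simp)
  exact ((ContinuousLinearMap.apply ℝ ℝ (Pi.single c 1)).contDiff.comp h2).differentiable (by simp)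

lemma diff_HinvY (hψ : ∀ i j, ContDiff ℝ (⊤ : ℕ∞) fun y => ψ y i j) (m n : Idx k l) :
    Differentiable ℝ (fun y => HinvY ψ C y m n) := by
  rcases m with i | (a' | i) <;> rcases n with j | (b' | j) <;>
    first
    | exact differentiable_const _
    | exact (contDiff_const.mul (hψ i j)).differentiable (by simp)

lemma diff_Gam (hψ : ∀ i j, ContDiff ℝ (⊤ : ℕ∞) fun y => ψ y i j) (m i j : Idx k l) :
    Differentiable ℝ (Gam ψ C m i j) := by
  refine Differentiable.const_mul ?_ _
  refine Differentiable.fun_sum fun n _ => ?_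
  exact (diff_HinvY hψ m n).mul (((diff_Dg hψ i j n).add (diff_Dg hψ j i n)).sub
    (diff_Dg hψ n i j))

lemma pd_christ_x (hψ : ∀ i j, ContDiff ℝ (⊤ : ℕ∞) fun y => ψ y i j) (hCnd : IsUnit C)
    (hginv : ∀ p, gPsi k l ψ C p * ginv p = 1 ∧ ginv p * gPsi k l ψ C p = 1)
    (e : Fin k) (m a b : Idx k l) (p : Idx k l → ℝ) :
    pd (Sum.inl e) (christoffel (gPsi k l ψ C) ginv m a b) p = 0 := by
  rw [christoffel_eq hψ hCnd hginv]
  exact pd_comp_x (diff_Gam hψ m a b) e p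

lemma pd_christ_xbar (hψ : ∀ i j, ContDiff ℝ (⊤ : ℕ∞) fun y => ψ y i j) (hCnd : IsUnit C)
    (hginv : ∀ p, gPsi k l ψ C p * ginv p = 1 ∧ ginv p * gPsi k l ψ C p = 1)
    (e : Fin k) (m a b : Idx k l) (p : Idx k l → ℝ) :
    pd (Sum.inr (Sum.inr e)) (christoffel (gPsi k l ψ C) ginv m a b) p = 0 := by
  rw [christoffel_eq hψ hCnd hginv]
  exact pd_comp_xbar (diff_Gam hψ m a b) e p
@[simp] lemma Gam_x (m : Fin k) (a b : Idx k l) (y : Fin l → ℝ) :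
    Gam ψ C (Sum.inl m) a b y = 0 := by
  simp [Gam, Fintype.sum_sum_type]

@[simp] lemma Gam_a_xbar (m : Idx k l) (c : Fin k) (b : Idx k l) (y : Fin l → ℝ) :
    Gam ψ C m (Sum.inr (Sum.inr c)) b y = 0 := by
  simp [Gam, Fintype.sum_sum_type]

@[simp] lemma Gam_b_xbar (m a : Idx k l) (c : Fin k) (y : Fin l → ℝ) :
    Gam ψ C m a (Sum.inr (Sum.inr c)) y = 0 := by
  simp [Gam, Fintype.sum_sum_type]

@[simp] lemma Gam_y_ya (e : Fin l) (a' : Fin l) (b : Idx k l) (y : Fin l → ℝ) :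
    Gam ψ C (Sum.inr (Sum.inl e)) (Sum.inr (Sum.inl a')) b y = 0 := by
  simp [Gam, Fintype.sum_sum_type]

@[simp] lemma Gam_y_yb (e : Fin l) (a : Idx k l) (b' : Fin l) (y : Fin l → ℝ) :
    Gam ψ C (Sum.inr (Sum.inl e)) a (Sum.inr (Sum.inl b')) y = 0 := by
  simp [Gam, Fintype.sum_sum_type]

@[simp] lemma Gam_yy (m : Idx k l) (a' b' : Fin l) (y : Fin l → ℝ) :
    Gam ψ C m (Sum.inr (Sum.inl a')) (Sum.inr (Sum.inl b')) y = 0 := by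
  simp [Gam, Fintype.sum_sum_type]

section Christ

variable (hψ : ∀ i j, ContDiff ℝ (⊤ : ℕ∞) fun y => ψ y i j) (hCnd : IsUnit C)
  (hginv : ∀ p, gPsi k l ψ C p * ginv p = 1 ∧ ginv p * gPsi k l ψ C p = 1)
include hψ hCnd hginv

lemma christ_x (m : Fin k) (a b : Idx k l) :
    christoffel (gPsi k l ψ C) ginv (Sum.inl m) a b = fun _ => 0 := by
  rw [christoffel_eq hψ hCnd hginv]; funext p; simp

lemma christ_a_xbar (m : Idx k l) (c : Fin k) (b : Idx k l) :
    christoffel (gPsi k l ψ C) ginv m (Sum.inr (Sum.inr c)) b = fun _ => 0 := by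
  rw [christoffel_eq hψ hCnd hginv]; funext p; simp

lemma christ_b_xbar (m a : Idx k l) (c : Fin k) :
    christoffel (gPsi k l ψ C) ginv m a (Sum.inr (Sum.inr c)) = fun _ => 0 := by
  rw [christoffel_eq hψ hCnd hginv]; funext p; simp

lemma christ_y_ya (e a' : Fin l) (b : Idx k l) :
    christoffel (gPsi k l ψ C) ginv (Sum.inr (Sum.inl e)) (Sum.inr (Sum.inl a')) b = fun _ => 0 := by
  rw [christoffel_eq hψ hCnd hginv]; funext p; simp

lemma christ_y_yb (e : Fin l) (a : Idx k l) (b' : Fin l) :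
    christoffel (gPsi k l ψ C) ginv (Sum.inr (Sum.inl e)) a (Sum.inr (Sum.inl b')) = fun _ => 0 := by
  rw [christoffel_eq hψ hCnd hginv]; funext p; simp

lemma christ_yy (m : Idx k l) (a' b' : Fin l) :
    christoffel (gPsi k l ψ C) ginv m (Sum.inr (Sum.inl a')) (Sum.inr (Sum.inl b')) = fun _ => 0 := by
  rw [christoffel_eq hψ hCnd hginv]; funext p; simp

end Christ
section Curv

variable (hψ : ∀ i j, ContDiff ℝ (⊤ : ℕ∞) fun y => ψ y i j) (hCnd : IsUnit C)
  (hginv : ∀ p, gPsi k l ψ C p * ginv p = 1 ∧ ginv p * gPsi k l ψ C p = 1)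
include hψ hCnd hginv

lemma curv_x (i j k' : Idx k l) (m : Fin k) (p : Idx k l → ℝ) :
    curvOp (gPsi k l ψ C) ginv i j k' (Sum.inl m) p = 0 := by
  simp [curvOp, christ_x hψ hCnd hginv, pd_zero]

lemma curv_xbar (c : Fin k) (j k' d : Idx k l) (p : Idx k l → ℝ) :
    curvOp (gPsi k l ψ C) ginv (Sum.inr (Sum.inr c)) j k' d p = 0 := by
  simp [curvOp, pd_christ_xbar hψ hCnd hginv, christ_a_xbar hψ hCnd hginv, pd_zero]

lemma curv_y_left (e : Fin l) (s : Fin l ⊕ Fin k) (j : Idx k l) (p : Idx k l → ℝ) :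
    curvOp (gPsi k l ψ C) ginv (Sum.inr (Sum.inl e)) (Sum.inr s) j (Sum.inr (Sum.inl e)) p = 0 := by
  rcases s with a | c <;>
    simp [curvOp, christ_y_ya hψ hCnd hginv, christ_a_xbar hψ hCnd hginv, pd_zero]

lemma curv_y_right (e : Fin l) (m : Idx k l) (s : Fin l ⊕ Fin k) (p : Idx k l → ℝ) :
    curvOp (gPsi k l ψ C) ginv (Sum.inr (Sum.inl e)) m (Sum.inr s) (Sum.inr (Sum.inl e)) p = 0 := by
  rcases s with a | c <;>
    simp [curvOp, Fintype.sum_sum_type, christ_y_ya hψ hCnd hginv, christ_y_yb hψ hCnd hginv,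
      christ_b_xbar hψ hCnd hginv, christ_x hψ hCnd hginv, pd_zero]

lemma ricci_left (s : Fin l ⊕ Fin k) (j : Idx k l) (p : Idx k l → ℝ) :
    ricci (gPsi k l ψ C) ginv (Sum.inr s) j p = 0 := by
  simp [ricci, Fintype.sum_sum_type, curv_x hψ hCnd hginv, curv_xbar hψ hCnd hginv,
    curv_y_left hψ hCnd hginv]

lemma ricci_right (m : Idx k l) (s : Fin l ⊕ Fin k) (p : Idx k l → ℝ) :
    ricci (gPsi k l ψ C) ginv m (Sum.inr s) p = 0 := by
  simp [ricci, Fintype.sum_sum_type, curv_x hψ hCnd hginv, curv_xbar hψ hCnd hginv,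
    curv_y_right hψ hCnd hginv]

lemma RO_col (i : Idx k l) (s : Fin l ⊕ Fin k) (p : Idx k l → ℝ) :
    ricciOp (gPsi k l ψ C) ginv p i (Sum.inr s) = 0 := by
  simp [ricciOp, ricci_right hψ hCnd hginv]

lemma RO_row_x (i' : Fin k) (j : Idx k l) (p : Idx k l → ℝ) :
    ricciOp (gPsi k l ψ C) ginv p (Sum.inl i') j = 0 := by
  simp [ricciOp, ginv_eq hCnd hginv, Fintype.sum_sum_type, ricci_left hψ hCnd hginv]

lemma RO_row_y (a : Fin l) (j : Idx k l) (p : Idx k l → ℝ) :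
    ricciOp (gPsi k l ψ C) ginv p (Sum.inr (Sum.inl a)) j = 0 := by
  simp [ricciOp, ginv_eq hCnd hginv, Fintype.sum_sum_type, ricci_left hψ hCnd hginv]

lemma jacobi_x (v w u : Idx k l → ℝ) (m : Fin k) (p : Idx k l → ℝ) :
    jacobiVec (gPsi k l ψ C) ginv p v w u (Sum.inl m) = 0 := by
  simp [jacobiVec, curvVec, curv_x hψ hCnd hginv]

lemma curvVec_rho (v w u : Idx k l → ℝ) (d : Idx k l) (p : Idx k l → ℝ) :
    curvVec (gPsi k l ψ C) ginv p
      (Matrix.mulVec (ricciOp (gPsi k l ψ C) ginv p) u) v w d = 0 := by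
  simp [curvVec, Fintype.sum_sum_type, Matrix.mulVec, dotProduct,
    RO_row_x hψ hCnd hginv, RO_row_y hψ hCnd hginv, curv_xbar hψ hCnd hginv]

lemma part1 (p ξ₁ ξ₂ u : Idx k l → ℝ) :
    Matrix.mulVec (ricciOp (gPsi k l ψ C) ginv p)
      (jacobiVec (gPsi k l ψ C) ginv p ξ₁ ξ₂ u) = 0 := by
  funext i
  simp [Matrix.mulVec, dotProduct, Fintype.sum_sum_type, RO_col hψ hCnd hginv,
    jacobi_x hψ hCnd hginv]

lemma part2 (p ξ₁ ξ₂ u : Idx k l → ℝ) :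
    jacobiVec (gPsi k l ψ C) ginv p ξ₁ ξ₂
      (Matrix.mulVec (ricciOp (gPsi k l ψ C) ginv p) u) = 0 := by
  funext d
  simp [jacobiVec, curvVec_rho hψ hCnd hginv]

end Curv
end Aux

/-- The manifold `(ℝ^{2k+l}, gPsi)` is Jacobi--Videv: at every
point the Ricci operator commutes with every (polarized) Jacobi operator; in
fact `rho ∘ J(ξ₁,ξ₂) = J(ξ₁,ξ₂) ∘ rho = 0`. -/
theorem stmt_11 (k l : ℕ) (hk : 1 ≤ k) (hl : 1 ≤ l)
    (ψ : (Fin l → ℝ) → Matrix (Fin k) (Fin k) ℝ)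
    (hψsmooth : ∀ i j, ContDiff ℝ (⊤ : ℕ∞) (fun y => ψ y i j))
    (hψsymm : ∀ y i j, ψ y i j = ψ y j i)
    (C : Matrix (Fin l) (Fin l) ℝ) (hCsymm : C.IsSymm)
    (hCnd : IsUnit C)
    (ginv : ((Fin k ⊕ (Fin l ⊕ Fin k)) → ℝ) →
      Matrix (Fin k ⊕ (Fin l ⊕ Fin k)) (Fin k ⊕ (Fin l ⊕ Fin k)) ℝ)
    (hginv : ∀ p, gPsi k l ψ C p * ginv p = 1 ∧ ginv p * gPsi k l ψ C p = 1) :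
    ∀ (p : (Fin k ⊕ (Fin l ⊕ Fin k)) → ℝ)
      (ξ₁ ξ₂ u : (Fin k ⊕ (Fin l ⊕ Fin k)) → ℝ),
      Matrix.mulVec (ricciOp (gPsi k l ψ C) ginv p) (jacobiVec (gPsi k l ψ C) ginv p ξ₁ ξ₂ u) = 0 ∧
      jacobiVec (gPsi k l ψ C) ginv p ξ₁ ξ₂ (Matrix.mulVec (ricciOp (gPsi k l ψ C) ginv p) u) = 0 ∧
      Matrix.mulVec (ricciOp (gPsi k l ψ C) ginv p) (jacobiVec (gPsi k l ψ C) ginv p ξ₁ ξ₁ u) =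
        jacobiVec (gPsi k l ψ C) ginv p ξ₁ ξ₁ (Matrix.mulVec (ricciOp (gPsi k l ψ C) ginv p) u) := by
  intro p ξ₁ ξ₂ u
  exact ⟨part1 hψsmooth hCnd hginv p ξ₁ ξ₂ u, part2 hψsmooth hCnd hginv p ξ₁ ξ₂ u,
    (part1 hψsmooth hCnd hginv p ξ₁ ξ₁ u).trans
      (part2 hψsmooth hCnd hginv p ξ₁ ξ₁ u).symm⟩
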